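/- Let N be a finite set and let v_or : Finset N → ℝ be arbitrary. For each S ⊆ N define the OR interaction I_or(S) = -∑_{L ⊆ S} (-1)^{|S|-|L|} v_or(N \ L). Then for every subset T ⊆ N one has ∑_{S ⊆ N, S ∩ T ≠ ∅} I_or(S) = v_or(T) - v_or(∅). -/

import Mathlib

/-!
With `w L = v Lᶜ`, the OR interaction is minus the Möbius transform of `w` on the Boolean
lattice, so summing the transform over all `S ⊆ A` recovers `w A`. Over all `S ⊆ N` this gives
`w N = v ∅`; over the `S` disjoint from `T`, i.e. `S ⊆ Tᶜ`, it gives `w Tᶜ = v T`. The sum over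
the `S` meeting `T` is the difference.
-/

open Finset

section BooleanMoebius

variable {α R : Type*} [DecidableEq α] [Ring R]

theorem sum_Icc_neg_one_pow_card_sub {s t : Finset α} (h : s ⊆ t) :
    ∑ u ∈ Icc s t, (-1 : R) ^ (#u - #s) = if s = t then 1 else 0 := by
  have hinj : Set.InjOn (s ∪ ·) (t \ s).powerset := by
    intro x hx y hy hxy
    simp only [coe_powerset, Set.mem_preimage, Set.mem_powerset_iff, coe_subset,
      subset_sdiff] at hx hy
    simpa [union_sdiff_cancel_left hx.2.symm, union_sdiff_cancel_left hy.2.symm] using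
      congrArg (· \ s) hxy
  rw [Icc_eq_image_powerset h, sum_image hinj]
  have hcard : ∀ u ∈ (t \ s).powerset, #(s ∪ u) - #s = #u := fun u hu => by
    rw [card_union_of_disjoint (subset_sdiff.mp (mem_powerset.mp hu)).2.symm,
      Nat.add_sub_cancel_left]
  rw [sum_congr rfl fun u hu => by rw [hcard u hu]]
  have halternating := congrArg (Int.cast : ℤ → R) (sum_powerset_neg_one_pow_card (x := t \ s))
  push_cast at halternating
  rw [halternating]
  refine if_congr ?_ rfl rfl
  rw [sdiff_eq_empty_iff_subset]
  exact ⟨subset_antisymm h, fun hst => hst ▸ subset_rfl⟩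

theorem sum_powerset_sum_powerset_neg_one_pow_mul (f : Finset α → R) (A : Finset α) :
    ∑ S ∈ A.powerset, ∑ L ∈ S.powerset, (-1 : R) ^ (#S - #L) * f L = f A := by
  rw [sum_comm' (t' := A.powerset) (s' := fun L => Icc L A) fun S L => by
    simp only [mem_powerset, mem_Icc]
    exact ⟨fun h => ⟨⟨h.2, h.1⟩, h.2.trans h.1⟩, fun h => ⟨h.1.2, h.1.1⟩⟩]
  calc ∑ L ∈ A.powerset, ∑ S ∈ Icc L A, (-1 : R) ^ (#S - #L) * f L
      = ∑ L ∈ A.powerset, (if L = A then f A else 0) := sum_congr rfl fun L hL => by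
        rw [← sum_mul, sum_Icc_neg_one_pow_card_sub (mem_powerset.mp hL)]
        split_ifs with h <;> simp [h]
    _ = f A := by simp

end BooleanMoebius

/-- **Universal matching for OR interactions.**
For an arbitrary `v_or : Finset N → ℝ`, defining the OR interaction
`I_or(S) = -∑_{L ⊆ S} (-1)^{|S|-|L|} v_or(N \ L)`, one has for every `T ⊆ N`:
`∑_{S ⊆ N, S ∩ T ≠ ∅} I_or(S) = v_or(T) - v_or(∅)`. -/
theorem sum_or_interactions_eq {N : Type*} [Fintype N] [DecidableEq N]
    (vor : Finset N → ℝ) (T : Finset N) :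
    ∑ S ∈ (Finset.univ : Finset (Finset N)).filter (fun S => S ∩ T ≠ ∅),
        (-(∑ L ∈ S.powerset, (-1 : ℝ) ^ (S.card - L.card) * vor Lᶜ)) =
      vor T - vor ∅ := by
  have hdisjoint : univ.filter (fun S : Finset N => ¬ S ∩ T ≠ ∅) = Tᶜ.powerset := by
    ext S
    simp [← disjoint_iff_inter_eq_empty, subset_compl_iff_disjoint_right]
  have hsplit := sum_filter_add_sum_filter_not univ (fun S : Finset N => S ∩ T ≠ ∅)
    fun S => ∑ L ∈ S.powerset, (-1 : ℝ) ^ (#S - #L) * vor Lᶜ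
  have htotal := sum_powerset_sum_powerset_neg_one_pow_mul (vor ·ᶜ) (univ : Finset N)
  rw [powerset_univ, compl_univ] at htotal
  rw [hdisjoint, htotal, sum_powerset_sum_powerset_neg_one_pow_mul (vor ·ᶜ), compl_compl]
    at hsplit
  rw [sum_neg_distrib]
  linarith
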